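/- arXiv:2309.13009 — 4 statements merged into one kernel-verified Lean document; each statement's English description precedes it below -/
import Mathlib

section
/- Let p be an odd prime and d an integer. The number of triples (a,b,c) in (ℤ/pℤ)³ with a² - 4bc ≡ d (mod p) equals p² + (d/p)·p, where (d/p) is the Legendre symbol. -/
open Finset

theorem card_triples_discriminant (p : ℕ) [Fact p.Prime] (hp : p ≠ 2) (d : ℤ) :
    ((Finset.univ.filter
        (fun t : ZMod p × ZMod p × ZMod p =>
          t.1 ^ 2 - 4 * t.2.1 * t.2.2 = (d : ZMod p))).card : ℤ)
      = (p : ℤ) ^ 2 + legendreSym p d * p := by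
  have hpp : p.Prime := Fact.out
  have h4 : (4 : ZMod p) ≠ 0 := by
    have : ((4 : ℕ) : ZMod p) ≠ 0 := by
      rw [Ne, ZMod.natCast_eq_zero_iff]
      intro h
      have h2 := hpp.dvd_of_dvd_pow (n := 2) (m := 2) (by simpa using h)
      exact hp ((Nat.prime_dvd_prime_iff_eq hpp Nat.prime_two).mp h2)
    simpa using this
  have hcard : Fintype.card (ZMod p) = p := ZMod.card p
  -- inner sum over c
  have key : ∀ a b : ZMod p,
      (∑ c : ZMod p, if a ^ 2 - 4 * b * c = (d : ZMod p) then (1 : ℤ) else 0)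
        = if b = 0 then (if a ^ 2 = (d : ZMod p) then (p : ℤ) else 0) else 1 := by
    intro a b
    by_cases hb : b = 0
    · subst hb
      simp only [mul_zero, zero_mul, sub_zero, if_pos rfl]
      by_cases ha : a ^ 2 = (d : ZMod p)
      · simp [ha, Finset.card_univ, hcard]
      · simp [ha]
    · rw [if_neg hb]
      have h4b : (4 * b : ZMod p) ≠ 0 := mul_ne_zero h4 hb
      have hiff : ∀ c : ZMod p,
          (a ^ 2 - 4 * b * c = (d : ZMod p)) ↔ c = (4 * b)⁻¹ * (a ^ 2 - d) := by
        intro c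
        rw [eq_inv_mul_iff_mul_eq₀ h4b]
        constructor <;> intro h <;> linear_combination -h
      simp only [hiff]
      simp
  have key2 : ∀ a : ZMod p,
      (∑ b : ZMod p, ∑ c : ZMod p,
          if a ^ 2 - 4 * b * c = (d : ZMod p) then (1 : ℤ) else 0)
        = (if a ^ 2 = (d : ZMod p) then (p : ℤ) else 0) + ((p : ℤ) - 1) := by
    intro a
    simp only [key]
    rw [← Finset.add_sum_erase _ _ (Finset.mem_univ (0 : ZMod p))]
    have : ∀ b ∈ Finset.univ.erase (0 : ZMod p),
        (if b = 0 then (if a ^ 2 = (d : ZMod p) then (p : ℤ) else 0) else 1) = 1 := by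
      intro b hb
      rw [if_neg (Finset.ne_of_mem_erase hb)]
    rw [Finset.sum_congr rfl this, Finset.sum_const, if_pos rfl,
      Finset.card_erase_of_mem (Finset.mem_univ _), Finset.card_univ, hcard]
    rw [nsmul_eq_mul, mul_one, Nat.cast_sub hpp.one_lt.le, Nat.cast_one]
  have hNa : ((Finset.univ.filter fun a : ZMod p => a ^ 2 = (d : ZMod p)).card : ℤ)
      = legendreSym p d + 1 := by
    rw [← legendreSym.card_sqrts (p := p) hp d]
    congr 1
    simp [Set.toFinset_setOf]
  calc ((Finset.univ.filter
        (fun t : ZMod p × ZMod p × ZMod p =>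
          t.1 ^ 2 - 4 * t.2.1 * t.2.2 = (d : ZMod p))).card : ℤ)
      = ∑ t : ZMod p × ZMod p × ZMod p,
          if t.1 ^ 2 - 4 * t.2.1 * t.2.2 = (d : ZMod p) then (1 : ℤ) else 0 := by
        rw [Finset.card_filter]; push_cast; rfl
    _ = ∑ a : ZMod p, ∑ b : ZMod p, ∑ c : ZMod p,
          if a ^ 2 - 4 * b * c = (d : ZMod p) then (1 : ℤ) else 0 := by
        rw [Fintype.sum_prod_type]
        exact Finset.sum_congr rfl fun a _ => Fintype.sum_prod_type _
    _ = ∑ a : ZMod p, ((if a ^ 2 = (d : ZMod p) then (p : ℤ) else 0) + ((p : ℤ) - 1)) := by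
        exact Finset.sum_congr rfl fun a _ => key2 a
    _ = (p : ℤ) ^ 2 + legendreSym p d * p := by
        rw [Finset.sum_add_distrib, Finset.sum_ite, Finset.sum_const, Finset.sum_const,
          Finset.sum_const, Finset.card_univ, hcard, smul_zero, add_zero, nsmul_eq_mul,
          nsmul_eq_mul, hNa]
        ring
end

section
/- Let p be an odd prime. Then the sum over all a, b, c in ℤ/pℤ of the Legendre symbol ((a² - 4bc)/p) equals p(p-1). -/
theorem sum_quadraticChar_discriminant (p : ℕ) [Fact p.Prime] (hp : p ≠ 2) :
    (∑ a : ZMod p, ∑ b : ZMod p, ∑ c : ZMod p,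
        (quadraticChar (ZMod p) (a ^ 2 - 4 * b * c) : ℤ))
      = (p : ℤ) * ((p : ℤ) - 1) := by
  have hchar : ringChar (ZMod p) ≠ 2 := by
    rw [ZMod.ringChar_zmod_n]; exact hp
  have h2 : (2 : ZMod p) ≠ 0 := Ring.two_ne_zero hchar
  have h4 : (-(4 : ZMod p)) ≠ 0 := by
    have : (4 : ZMod p) = 2 * 2 := by norm_num
    simpa [this] using mul_ne_zero h2 h2
  have hzero : (∑ x : ZMod p, (quadraticChar (ZMod p) x : ℤ)) = 0 :=
    quadraticChar_sum_zero hchar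
  have hinner : ∀ a b : ZMod p, b ≠ 0 →
      (∑ c : ZMod p, (quadraticChar (ZMod p) (a ^ 2 - 4 * b * c) : ℤ)) = 0 := by
    intro a b hb
    have hm : (-(4 * b)) ≠ 0 := by
      simpa [neg_mul] using mul_ne_zero h4 hb
    let e : ZMod p ≃ ZMod p :=
      (Equiv.mulLeft₀ (-(4 * b)) hm).trans (Equiv.addLeft (a ^ 2))
    have : (∑ c : ZMod p, (quadraticChar (ZMod p) (e c) : ℤ)) = 0 := by
      rw [Equiv.sum_comp e (fun x => (quadraticChar (ZMod p) x : ℤ))]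
      exact hzero
    simpa [e, Equiv.mulLeft₀, sub_eq_add_neg, mul_assoc, mul_comm, mul_left_comm,
      add_comm] using this
  have hb0 : ∀ a : ZMod p,
      (∑ b : ZMod p, ∑ c : ZMod p, (quadraticChar (ZMod p) (a ^ 2 - 4 * b * c) : ℤ))
        = (p : ℤ) * (quadraticChar (ZMod p) (a ^ 2) : ℤ) := by
    intro a
    rw [Finset.sum_eq_single 0]
    · simp [ZMod.card]
    · intro b _ hb; exact hinner a b hb
    · simp
  rw [Finset.sum_congr rfl (fun a _ => hb0 a), ← Finset.mul_sum]
  congr 1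
  have : ∀ a : ZMod p, (quadraticChar (ZMod p) (a ^ 2) : ℤ) = if a = 0 then 0 else 1 := by
    intro a
    by_cases ha : a = 0
    · simp [ha]
    · simp [quadraticChar_sq_one' ha, ha]
  rw [Finset.sum_congr rfl (fun a _ => this a)]
  have h : (∑ a : ZMod p, if a = 0 then (0:ℤ) else 1)
      = ∑ a : ZMod p, ((1:ℤ) - if a = 0 then 1 else 0) :=
    Finset.sum_congr rfl (fun a _ => by split <;> ring)
  rw [h, Finset.sum_sub_distrib, Finset.sum_const,
    Finset.sum_ite_eq' Finset.univ (0 : ZMod p) (fun _ => (1:ℤ))]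
  simp [ZMod.card]
end

section
/- Let p be an odd prime and ℓ a positive odd integer. Then the sum over a, b, c in ℤ/pℤ of ((a² - 4bc)/p)^ℓ equals p(p-1) = p² - p. -/
theorem sum_quadraticChar_pow_odd (p : ℕ) [Fact p.Prime] (hp : p ≠ 2)
    (l : ℕ) (hl : Odd l) :
    (∑ a : ZMod p, ∑ b : ZMod p, ∑ c : ZMod p,
        (quadraticChar (ZMod p) (a ^ 2 - 4 * b * c) : ℤ) ^ l)
      = (p : ℤ) ^ 2 - (p : ℤ) := by
  have hl0 : l ≠ 0 := by rintro rfl; simp at hl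
  have hchar : ringChar (ZMod p) ≠ 2 := by
    rw [ZMod.ringChar_zmod_n]; exact hp
  have hpow : ∀ x : ZMod p,
      (quadraticChar (ZMod p) x : ℤ) ^ l = quadraticChar (ZMod p) x := by
    intro x
    rcases quadraticChar_isQuadratic (ZMod p) x with h | h | h <;>
      rw [h] <;> simp [hl.neg_one_pow, hl0]
  simp only [hpow]
  have h4 : (4 : ZMod p) ≠ 0 := by
    have : ((4 : ℕ) : ZMod p) ≠ 0 := by
      rw [Ne, ZMod.natCast_eq_zero_iff]
      intro h
      have h2 : p ∣ 2 ^ 2 := by norm_num at h ⊢; exact h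
      have := Nat.Prime.dvd_of_dvd_pow (Fact.out) h2
      exact hp ((Nat.prime_dvd_prime_iff_eq Fact.out Nat.prime_two).mp this)
    simpa using this
  have hinner : ∀ a b : ZMod p, b ≠ 0 →
      (∑ c : ZMod p, (quadraticChar (ZMod p) (a ^ 2 - 4 * b * c) : ℤ)) = 0 := by
    intro a b hb
    have hu : (4 * b : ZMod p) ≠ 0 := mul_ne_zero h4 hb
    have hbij : Function.Bijective (fun c : ZMod p => a ^ 2 - 4 * b * c) := by
      refine Finite.injective_iff_bijective.mp ?_
      intro x y h
      simp only [sub_right_inj] at h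
      have : (4 * b) * x = (4 * b) * y := by ring_nf; ring_nf at h; linear_combination h
      exact mul_left_cancel₀ hu this
    calc (∑ c : ZMod p, (quadraticChar (ZMod p) (a ^ 2 - 4 * b * c) : ℤ))
        = ∑ x : ZMod p, (quadraticChar (ZMod p) x : ℤ) :=
          Fintype.sum_bijective _ hbij _ _ (fun c => rfl)
      _ = 0 := quadraticChar_sum_zero hchar
  have hzero : ∀ a : ZMod p,
      (∑ b : ZMod p, ∑ c : ZMod p, (quadraticChar (ZMod p) (a ^ 2 - 4 * b * c) : ℤ))
        = (p : ℤ) * quadraticChar (ZMod p) (a ^ 2) := by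
    intro a
    rw [Finset.sum_eq_single 0]
    · simp [ZMod.card]
    · intro b _ hb; exact hinner a b hb
    · simp
  simp only [hzero]
  rw [← Finset.mul_sum]
  have hsq : (∑ a : ZMod p, (quadraticChar (ZMod p) (a ^ 2) : ℤ))
      = (p : ℤ) - 1 := by
    have : ∀ a : ZMod p, (quadraticChar (ZMod p) (a ^ 2) : ℤ)
        = 1 - (if a = 0 then 1 else 0) := by
      intro a
      by_cases h : a = 0
      · simp [h]
      · simp [h, quadraticChar_sq_one' h]
    simp only [this]
    rw [Finset.sum_sub_distrib]
    simp [ZMod.card]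
  rw [hsq]; ring
end

section
/- Let b be a completely multiplicative arithmetic function with values in ℝ (or ℂ), let x ≥ 2 and j a positive integer. Then (Σ_{p ≤ x} b(p))^j = j! · Σ_{n : p|n ⟹ p ≤ x, Ω(n) = j} b(n)·ν(n), where ν is the multiplicative function with ν(p^a) = 1/a! and Ω counts prime factors with multiplicity. -/
/-!
Expanding the `j`-th power by the multinomial theorem gives a sum of
`multinomial k * ∏ b p ^ k p` over exponent vectors `k` on the primes `p ≤ x` with `∑ k p = j`.
By unique factorization these vectors correspond to the `x`-smooth `n = ∏ p ^ k p` with `Ω n = j`,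
and `multinomial k = j! * ∏ 1 / (k p)! = j! * ν n`.
-/

open scoped Classical

open Finset ArithmeticFunction
open scoped ArithmeticFunction.Omega

namespace Nat

theorem cast_multinomial {α K : Type*} [Field K] [CharZero K] (s : Finset α) (k : α → ℕ) :
    (multinomial s k : K) = (∑ i ∈ s, k i)! * ∏ i ∈ s, ((k i)! : K)⁻¹ := by
  have hne : (∏ i ∈ s, ((k i)! : K)) ≠ 0 :=
    prod_ne_zero_iff.2 fun i _ => mod_cast (k i).factorial_ne_zero
  rw [← multinomial_spec, prod_inv_distrib, ← div_eq_mul_inv]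
  push_cast
  exact (mul_div_cancel_left₀ _ hne).symm

theorem le_pow_cardFactors {n N : ℕ} (h : ∀ p, p.Prime → p ∣ n → p ≤ N) : n ≤ N ^ Ω n := by
  rcases eq_or_ne n 0 with rfl | hn
  · exact Nat.zero_le _
  conv_lhs => rw [← prod_primeFactorsList hn]
  rw [cardFactors_apply]
  exact List.prod_le_pow_card _ _ fun p hp =>
    h p (prime_of_mem_primeFactorsList hp) (dvd_of_mem_primeFactorsList hp)

variable {S : Finset ℕ} {k : ℕ → ℕ} {n : ℕ}

theorem factorization_prod_pow_of_support_subset (hS : ∀ p ∈ S, p.Prime)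
    (hk : ∀ p, k p ≠ 0 → p ∈ S) : ⇑(∏ p ∈ S, p ^ k p).factorization = k := by
  ext q
  rw [factorization_prod fun p hp => pow_ne_zero _ (hS p hp).ne_zero, Finsupp.finsetSum_apply,
    sum_congr rfl fun p hp => by rw [(hS p hp).factorization_pow, Finsupp.single_apply],
    sum_ite_eq', ite_eq_left_iff]
  exact fun hq => (not_imp_comm.1 (hk q) hq).symm

theorem prod_pow_factorization_of_primeFactors_subset (hn : n ≠ 0) (h : n.primeFactors ⊆ S) :
    ∏ p ∈ S, p ^ n.factorization p = n := by
  rw [← Finsupp.prod_of_support_subset _ (support_factorization n ▸ h) _ (fun _ _ => pow_zero _),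
    prod_factorization_pow_eq_self hn]

theorem cardFactors_eq_sum_of_primeFactors_subset (h : n.primeFactors ⊆ S) :
    Ω n = ∑ p ∈ S, n.factorization p := by
  rw [cardFactors_eq_sum_factorization,
    Finsupp.sum_of_support_subset _ (support_factorization n ▸ h) _ (fun _ _ => rfl)]

theorem apply_prod_pow_of_coprime_mul {β : Type*} [CommMonoid β] {f : ℕ → β}
    (h_mult : ∀ m n, Coprime m n → f (m * n) = f m * f n) (hf : f 1 = 1)
    (hS : ∀ p ∈ S, p.Prime) (hk : ∀ p, k p ≠ 0 → p ∈ S) :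
    f (∏ p ∈ S, p ^ k p) = ∏ p ∈ S, f (p ^ k p) := by
  have hfact := factorization_prod_pow_of_support_subset hS hk
  have hsupp : (∏ p ∈ S, p ^ k p).factorization.support ⊆ S := fun p hp =>
    hk p (hfact ▸ Finsupp.mem_support_iff.1 hp)
  rw [multiplicative_factorization f h_mult hf
      (prod_ne_zero_iff.2 fun p hp => pow_ne_zero _ (hS p hp).ne_zero),
    Finsupp.prod_of_support_subset _ hsupp _ (fun _ _ => by rw [pow_zero, hf]), hfact]

end Nat

open Nat

theorem sum_piAntidiag_prod_pow_eq_sum {M : Type*} [AddCommMonoid M] {S T : Finset ℕ} {j : ℕ}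
    (hS : ∀ p ∈ S, p.Prime) (hT : ∀ n, n ∈ T ↔ n ≠ 0 ∧ n.primeFactors ⊆ S ∧ Ω n = j)
    (g : ℕ → M) : ∑ k ∈ S.piAntidiag j, g (∏ p ∈ S, p ^ k p) = ∑ n ∈ T, g n := by
  refine sum_nbij' (fun k => ∏ p ∈ S, p ^ k p) (fun n => ⇑n.factorization) ?_ ?_ ?_ ?_ ?_
  · intro k hk
    obtain ⟨hsum, hk⟩ := mem_piAntidiag.1 hk
    have hfact := factorization_prod_pow_of_support_subset hS hk
    have hsub : (∏ p ∈ S, p ^ k p).primeFactors ⊆ S := fun p hp =>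
      hk p (hfact ▸ Finsupp.mem_support_iff.1 (support_factorization _ ▸ hp))
    refine (hT _).2 ⟨prod_ne_zero_iff.2 fun p hp => pow_ne_zero _ (hS p hp).ne_zero, hsub, ?_⟩
    rw [cardFactors_eq_sum_of_primeFactors_subset hsub, hfact, hsum]
  · intro n hn
    obtain ⟨-, hsub, hΩ⟩ := (hT n).1 hn
    refine mem_piAntidiag.2 ⟨(cardFactors_eq_sum_of_primeFactors_subset hsub).symm.trans hΩ,
      fun p hp => hsub (support_factorization n ▸ Finsupp.mem_support_iff.2 hp)⟩
  · intro k hk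
    exact factorization_prod_pow_of_support_subset hS (mem_piAntidiag.1 hk).2
  · intro n hn
    obtain ⟨hn0, hsub, -⟩ := (hT n).1 hn
    exact prod_pow_factorization_of_primeFactors_subset hn0 hsub
  · intro k _
    rfl

theorem mem_filter_range_floor_iff {x : ℝ} {p : ℕ} :
    p ∈ (range (⌊x⌋₊ + 1)).filter (fun p : ℕ => p.Prime ∧ (p : ℝ) ≤ x) ↔
      p.Prime ∧ (p : ℝ) ≤ x := by
  rw [mem_filter, mem_range, and_iff_right_iff_imp]
  exact fun h => lt_succ_of_le (le_floor h.2)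

theorem mem_filter_Icc_floor_pow_iff {x : ℝ} {j n : ℕ} :
    n ∈ (Icc 1 (⌊x⌋₊ ^ j)).filter
        (fun n : ℕ => (∀ p : ℕ, p.Prime → p ∣ n → (p : ℝ) ≤ x) ∧ Ω n = j) ↔
      n ≠ 0 ∧ n.primeFactors ⊆ (range (⌊x⌋₊ + 1)).filter (fun p : ℕ => p.Prime ∧ (p : ℝ) ≤ x) ∧
        Ω n = j := by
  simp only [subset_iff, mem_filter_range_floor_iff]
  simp only [mem_filter, mem_Icc, mem_primeFactors]
  constructor
  · rintro ⟨⟨hn, -⟩, hx, hΩ⟩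
    exact ⟨one_le_iff_ne_zero.1 hn, fun p ⟨hp, hd, _⟩ => ⟨hp, hx p hp hd⟩, hΩ⟩
  · rintro ⟨hn, hsub, hΩ⟩
    have hx : ∀ p : ℕ, p.Prime → p ∣ n → (p : ℝ) ≤ x := fun p hp hd => (hsub ⟨hp, hd, hn⟩).2
    exact ⟨⟨one_le_iff_ne_zero.2 hn, hΩ ▸ le_pow_cardFactors fun p hp hd => le_floor (hx p hp hd)⟩,
      hx, hΩ⟩

theorem sum_primes_pow_eq_general (b : ℕ → ℝ) (hb1 : b 1 = 1)
    (hbmult : ∀ m n : ℕ, b (m * n) = b m * b n)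
    (ν : ℕ → ℝ) (hν1 : ν 1 = 1)
    (hνmult : ∀ m n : ℕ, Nat.Coprime m n → ν (m * n) = ν m * ν n)
    (hνpp : ∀ p a : ℕ, p.Prime → 1 ≤ a → ν (p ^ a) = 1 / (a.factorial : ℝ))
    (x : ℝ) (j : ℕ) :
    (∑ p ∈ (Finset.range (⌊x⌋₊ + 1)).filter (fun p : ℕ => p.Prime ∧ (p : ℝ) ≤ x), b p) ^ j
      = (j.factorial : ℝ) *
        ∑ n ∈ (Finset.Icc 1 (⌊x⌋₊ ^ j)).filter
            (fun n : ℕ => (∀ p : ℕ, p.Prime → p ∣ n → (p : ℝ) ≤ x) ∧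
              ArithmeticFunction.cardFactors n = j),
          b n * ν n := by
  set S := (range (⌊x⌋₊ + 1)).filter (fun p : ℕ => p.Prime ∧ (p : ℝ) ≤ x)
  have hS : ∀ p ∈ S, p.Prime := fun p hp => (mem_filter_range_floor_iff.1 hp).1
  let bHom : ℕ →* ℝ := ⟨⟨b, hb1⟩, hbmult⟩
  have hν_pow (p a : ℕ) (hp : p.Prime) : ν (p ^ a) = (a ! : ℝ)⁻¹ := by
    rcases a.eq_zero_or_pos with rfl | ha
    · simp [hν1]
    · rw [hνpp p a hp ha, one_div]
  rw [sum_pow_eq_sum_piAntidiag, mul_sum,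
    ← sum_piAntidiag_prod_pow_eq_sum hS fun n => mem_filter_Icc_floor_pow_iff]
  refine sum_congr rfl fun k hk => ?_
  obtain ⟨hsum, hk⟩ := mem_piAntidiag.1 hk
  have hb : b (∏ p ∈ S, p ^ k p) = ∏ p ∈ S, b p ^ k p :=
    (map_prod bHom _ S).trans (prod_congr rfl fun p _ => map_pow bHom p (k p))
  rw [hb, apply_prod_pow_of_coprime_mul hνmult hν1 hS hk,
    prod_congr rfl fun p hp => hν_pow p (k p) (hS p hp), cast_multinomial, hsum]
  ring

theorem sum_primes_pow_eq (b : ℕ → ℝ) (hb1 : b 1 = 1)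
    (hbmult : ∀ m n : ℕ, b (m * n) = b m * b n)
    (ν : ℕ → ℝ) (hν1 : ν 1 = 1)
    (hνmult : ∀ m n : ℕ, Nat.Coprime m n → ν (m * n) = ν m * ν n)
    (hνpp : ∀ p a : ℕ, p.Prime → 1 ≤ a → ν (p ^ a) = 1 / (a.factorial : ℝ))
    (x : ℝ) (hx : 2 ≤ x) (j : ℕ) (hj : 0 < j) :
    (∑ p ∈ (Finset.range (⌊x⌋₊ + 1)).filter (fun p : ℕ => p.Prime ∧ (p : ℝ) ≤ x), b p) ^ j
      = (j.factorial : ℝ) *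
        ∑ n ∈ (Finset.Icc 1 (⌊x⌋₊ ^ j)).filter
            (fun n : ℕ => (∀ p : ℕ, p.Prime → p ∣ n → (p : ℝ) ≤ x) ∧
              ArithmeticFunction.cardFactors n = j),
          b n * ν n :=
  sum_primes_pow_eq_general b hb1 hbmult ν hν1 hνmult hνpp x j
end
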